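/- Homogeneity of the L-distance under convex combinations: Let E be a real normed vector space, A ⊆ E a convex subset, and ≤ a partial order on A such that for all a, b, c ∈ A and λ ∈ [0,1], a ≤ b implies λ·a + (1−λ)·c ≤ λ·b + (1−λ)·c. Define on A the L-distance d_L(x,y) := sup { f(x) − f(y) : f : A → ℝ monotone and 1-Lipschitz with respect to the norm metric }. Then for all x, y, z ∈ A and α ∈ [0,1]: d_L(α·x + (1−α)·z, α·y + (1−α)·z) = α · d_L(x,y). -/

import Mathlib

/-- The L-distance on an ordered metric space: the supremum of `f x − f y` over all
monotone 1-Lipschitz functions `f : A → ℝ`. -/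
noncomputable def dL {A : Type*} [MetricSpace A] [PartialOrder A] (x y : A) : ℝ :=
  sSup {t : ℝ | ∃ f : A → ℝ, Monotone f ∧ LipschitzWith 1 f ∧ t = f x - f y}

namespace DLAux

variable {E : Type*} [NormedAddCommGroup E] [NormedSpace ℝ E]
variable (A : Set E) [PartialOrder ↥A]

/-- The cone (as a set of conic combinations) generated by differences of comparable pairs. -/
def dCone : Set E :=
  {s | ∃ (n : ℕ) (μ : Fin n → ℝ) (p q : Fin n → ↥A),
      (∀ i, 0 ≤ μ i) ∧ (∀ i, p i ≤ q i) ∧ s = ∑ i, μ i • ((q i : E) - (p i : E))}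

lemma zero_mem_dCone : (0 : E) ∈ dCone A :=
  ⟨0, fun i => i.elim0, fun i => i.elim0, fun i => i.elim0,
    fun i => i.elim0, fun i => i.elim0, by simp⟩

lemma sub_mem_dCone {p q : ↥A} (h : p ≤ q) : (q : E) - (p : E) ∈ dCone A :=
  ⟨1, fun _ => 1, fun _ => p, fun _ => q, fun _ => zero_le_one, fun _ => h, by simp⟩

lemma smul_mem_dCone {s : E} (hs : s ∈ dCone A) {t : ℝ} (ht : 0 ≤ t) :
    t • s ∈ dCone A := by
  obtain ⟨n, μ, p, q, hμ, hpq, rfl⟩ := hs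
  exact ⟨n, fun i => t * μ i, p, q, fun i => mul_nonneg ht (hμ i), hpq, by
    rw [Finset.smul_sum]; exact Finset.sum_congr rfl fun i _ => (mul_smul _ _ _).symm⟩

lemma add_mem_dCone {s t : E} (hs : s ∈ dCone A) (ht : t ∈ dCone A) :
    s + t ∈ dCone A := by
  obtain ⟨n, μ, p, q, hμ, hpq, rfl⟩ := hs
  obtain ⟨n', μ', p', q', hμ', hpq', rfl⟩ := ht
  refine ⟨n + n', Fin.append μ μ', Fin.append p p', Fin.append q q', ?_, ?_, ?_⟩
  · intro i
    refine Fin.addCases (fun i => ?_) (fun i => ?_) i <;>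
      simp [Fin.append_left, Fin.append_right, hμ, hμ']
  · intro i
    refine Fin.addCases (fun i => ?_) (fun i => ?_) i <;>
      simp [Fin.append_left, Fin.append_right, hpq, hpq']
  · rw [Fin.sum_univ_add]
    simp [Fin.append_left, Fin.append_right]

lemma convex_dCone : Convex ℝ (dCone A) := by
  intro a ha b hb la lb hla hlb _
  exact add_mem_dCone A (smul_mem_dCone A ha hla) (smul_mem_dCone A hb hlb)

/-- A convex combination of elements of `A` (with one extra anchor) lies in `A`. -/
lemma comb_mem (hconv : Convex ℝ A) {m : ℕ} (ν : Fin m → ℝ) (hν : ∀ i, 0 ≤ ν i)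
    (hσ : ∑ i, ν i ≤ 1) (zz : Fin m → ↥A) (u : ↥A) :
    (∑ i, ν i • (zz i : E)) + (1 - ∑ i, ν i) • (u : E) ∈ A := by
  have h := hconv.sum_mem (t := (Finset.univ : Finset (Fin (m + 1))))
    (w := Fin.cons (1 - ∑ i, ν i) ν) (z := Fin.cons (u : E) (fun i => (zz i : E)))
    (by
      intro i _
      refine Fin.cases ?_ ?_ i
      · simpa using sub_nonneg.2 hσ
      · intro j; simpa using hν j)
    (by simp [Fin.sum_cons])
    (by
      intro i _
      refine Fin.cases ?_ ?_ i
      · simpa using u.2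
      · intro j; simpa using (zz j).2)
  rw [Fin.sum_univ_succ] at h
  simpa [add_comm] using h


lemma mono_comb (hconv : Convex ℝ A)
    (hcompat : ∀ (a b c : ↥A) (lam : ℝ) (h0 : 0 ≤ lam) (h1 : lam ≤ 1), a ≤ b →
      (⟨lam • (a : E) + (1 - lam) • (c : E),
          hconv a.2 c.2 h0 (by linarith) (by ring)⟩ : ↥A) ≤
        ⟨lam • (b : E) + (1 - lam) • (c : E),
          hconv b.2 c.2 h0 (by linarith) (by ring)⟩) :
    ∀ (m : ℕ) (ν : Fin m → ℝ) (p q : Fin m → ↥A) (u : ↥A),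
      (∀ i, 0 ≤ ν i) → (∑ i, ν i) < 1 → (∀ i, p i ≤ q i) →
      ∀ (hL : (∑ i, ν i • (p i : E)) + (1 - ∑ i, ν i) • (u : E) ∈ A)
        (hR : (∑ i, ν i • (q i : E)) + (1 - ∑ i, ν i) • (u : E) ∈ A),
        (⟨_, hL⟩ : ↥A) ≤ (⟨_, hR⟩ : ↥A) := by
  intro m
  induction m with
  | zero =>
    intro ν p q u hν hσ hpq hL hR
    exact le_of_eq (Subtype.ext rfl)
  | succ m ih =>
    intro ν p q u hν hσ hpq hL hR
    have htail0 : (0:ℝ) ≤ ∑ i : Fin m, ν i.succ :=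
      Finset.sum_nonneg fun i _ => hν i.succ
    have hsum : ∑ i : Fin (m+1), ν i = ν 0 + ∑ i : Fin m, ν i.succ := Fin.sum_univ_succ ν
    have hν0 : 0 ≤ ν 0 := hν 0
    have hν0lt : ν 0 < 1 := by linarith
    have hc1 : (0:ℝ) < 1 - ν 0 := by linarith
    set c1 : ℝ := 1 - ν 0 with hc1def
    set τ : Fin m → ℝ := fun i => ν i.succ / c1 with hτdef
    have hτ0 : ∀ i, 0 ≤ τ i := fun i => div_nonneg (hν i.succ) hc1.le
    have hτsum : ∑ i, τ i = (∑ i : Fin m, ν i.succ) / c1 := by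
      rw [hτdef]; exact (Finset.sum_div _ _ _).symm
    have hτlt : ∑ i, τ i < 1 := by
      rw [hτsum, div_lt_one hc1]; linarith
    have memWp : (∑ i, τ i • ((p i.succ : E))) + (1 - ∑ i, τ i) • (u : E) ∈ A :=
      comb_mem A hconv τ hτ0 hτlt.le (fun i => p i.succ) u
    have memWq : (∑ i, τ i • ((q i.succ : E))) + (1 - ∑ i, τ i) • (u : E) ∈ A :=
      comb_mem A hconv τ hτ0 hτlt.le (fun i => q i.succ) u
    set Wp : ↥A := ⟨_, memWp⟩ with hWpdef
    set Wq : ↥A := ⟨_, memWq⟩ with hWqdef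
    have hW : Wp ≤ Wq :=
      ih τ (fun i => p i.succ) (fun i => q i.succ) u hτ0 hτlt (fun i => hpq i.succ) memWp memWq
    have hWpE : (Wp : E) = (∑ i, τ i • ((p i.succ : E))) + (1 - ∑ i, τ i) • (u : E) := rfl
    have hWqE : (Wq : E) = (∑ i, τ i • ((q i.succ : E))) + (1 - ∑ i, τ i) • (u : E) := rfl
    have hct : ∀ i : Fin m, c1 * τ i = ν i.succ := fun i => by
      rw [hτdef]; field_simp
    have hcs : c1 * (1 - ∑ i, τ i) = 1 - ∑ i : Fin (m+1), ν i := by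
      rw [hτsum, hsum]; field_simp; rw [hc1def]; ring
    have e1 : 1 - c1 = ν 0 := by rw [hc1def]; ring
    have idp : (∑ i : Fin (m+1), ν i • (p i : E)) + (1 - ∑ i : Fin (m+1), ν i) • (u : E)
        = c1 • (Wp : E) + (1 - c1) • ((p 0 : ↥A) : E) := by
      rw [hWpE, smul_add, Finset.smul_sum, e1]
      simp only [smul_smul, hct, hcs]
      rw [Fin.sum_univ_succ (f := fun i => ν i • (p i : E))]
      abel
    have idq : (∑ i : Fin (m+1), ν i • (q i : E)) + (1 - ∑ i : Fin (m+1), ν i) • (u : E)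
        = c1 • (Wq : E) + (1 - c1) • ((q 0 : ↥A) : E) := by
      rw [hWqE, smul_add, Finset.smul_sum, e1]
      simp only [smul_smul, hct, hcs]
      rw [Fin.sum_univ_succ (f := fun i => ν i • (q i : E))]
      abel
    have key1 := hcompat Wp Wq (p 0) c1 hc1.le (by linarith) hW
    have key2 := hcompat (p 0) (q 0) Wq (ν 0) hν0 hν0lt.le (hpq 0)
    refine le_trans (le_of_eq (Subtype.ext ?_))
      (le_trans key1 (le_trans (le_of_eq (Subtype.ext ?_))
        (le_trans key2 (le_of_eq (Subtype.ext ?_)))))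
    · exact idp
    · -- c1 • Wq + (1 - c1) • p0 = ν0 • p0 + (1 - ν0) • Wq
      dsimp only
      rw [e1, ← hc1def]
      abel
    · -- ν0 • q0 + (1 - ν0) • Wq = sum expression
      dsimp only
      rw [idq, e1, ← hc1def]
      abel


set_option maxHeartbeats 1000000 in
lemma star_bound (hconv : Convex ℝ A)
    (hcompat : ∀ (a b c : ↥A) (lam : ℝ) (h0 : 0 ≤ lam) (h1 : lam ≤ 1), a ≤ b →
      (⟨lam • (a : E) + (1 - lam) • (c : E),
          hconv a.2 c.2 h0 (by linarith) (by ring)⟩ : ↥A) ≤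
        ⟨lam • (b : E) + (1 - lam) • (c : E),
          hconv b.2 c.2 h0 (by linarith) (by ring)⟩)
    (f : ↥A → ℝ) (hmono : Monotone f) (hlip : LipschitzWith 1 f)
    (x y : ↥A) {s : E} (hs : s ∈ dCone A) :
    f x - f y ≤ ‖((y : E) - (x : E)) - s‖ := by
  have flip : ∀ a b : ↥A, f a - f b ≤ ‖(a : E) - (b : E)‖ := by
    intro a b
    have h := hlip.dist_le_mul a b
    rw [Subtype.dist_eq] at h
    rw [dist_eq_norm, dist_eq_norm] at h
    simp only [NNReal.coe_one, one_mul] at h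
    have h1 : f a - f b ≤ ‖f a - f b‖ := by
      rw [Real.norm_eq_abs]; exact le_abs_self _
    linarith
  obtain ⟨m, μ, p, q, hμ0, hpq, rfl⟩ := hs
  set S : E := ∑ i, μ i • ((q i : E) - (p i : E)) with hSdef
  set D : ℝ := ‖((y : E) - (x : E)) - S‖ with hDdef
  have hD0 : 0 ≤ D := hDdef ▸ norm_nonneg _
  refine le_of_forall_pos_le_add ?_
  intro ε hε
  set M : ℝ := ∑ i, μ i with hMdef
  have hM0 : 0 ≤ M := Finset.sum_nonneg fun i _ => hμ0 i
  set K1 : ℝ := ∑ i, μ i * ‖(p i : E) - (x : E)‖ with hK1def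
  set K2 : ℝ := ∑ i, μ i * ‖(q i : E) - (y : E)‖ with hK2def
  have hK10 : 0 ≤ K1 :=
    Finset.sum_nonneg fun i _ => mul_nonneg (hμ0 i) (norm_nonneg _)
  have hK20 : 0 ≤ K2 :=
    Finset.sum_nonneg fun i _ => mul_nonneg (hμ0 i) (norm_nonneg _)
  set K : ℝ := K1 + K2 + ‖(y:E) - (x:E)‖ + M * ‖(y:E) - (x:E)‖ with hKdef
  have hK0 : 0 ≤ K := by
    have : 0 ≤ M * ‖(y:E) - (x:E)‖ := mul_nonneg hM0 (norm_nonneg _)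
    have h4 : (0:ℝ) ≤ ‖(y:E) - (x:E)‖ := norm_nonneg _
    rw [hKdef]; linarith
  obtain ⟨N, hNgt⟩ := exists_nat_gt (max M (K / ε))
  have hNM : M < (N:ℝ) := lt_of_le_of_lt (le_max_left _ _) hNgt
  have hN0 : (0:ℝ) < N := lt_of_le_of_lt hM0 hNM
  have hNpos : 0 < N := by exact_mod_cast hN0
  have hKN : K / N ≤ ε := by
    rw [div_le_iff₀ hN0]
    have h2 : K / ε < N := lt_of_le_of_lt (le_max_right _ _) hNgt
    rw [div_lt_iff₀ hε] at h2
    nlinarith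
  set ν : Fin m → ℝ := fun i => μ i / N with hνdef
  have hν0 : ∀ i, 0 ≤ ν i := fun i => div_nonneg (hμ0 i) hN0.le
  have hσM : (∑ i, ν i) = M / N := by
    rw [hMdef]; exact (Finset.sum_div _ _ _).symm
  have hσ0 : 0 ≤ ∑ i, ν i := Finset.sum_nonneg fun i _ => hν0 i
  have hσ1 : (∑ i, ν i) < 1 := by rw [hσM, div_lt_one hN0]; exact hNM
  set σ : ℝ := ∑ i, ν i with hσdef
  set uE : ℕ → E := fun k => (1 - (k:ℝ)/N) • (x:E) + ((k:ℝ)/N) • (y:E) with huEdef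
  have huA : ∀ k : ℕ, k ≤ N → uE k ∈ A := by
    intro k hk
    have h1 : (0:ℝ) ≤ (k:ℝ)/N := by positivity
    have h2 : (k:ℝ)/N ≤ 1 := by
      rw [div_le_one hN0]; exact_mod_cast hk
    exact hconv x.2 y.2 (by linarith) h1 (by ring)
  set LE : ℕ → E := fun k => (∑ i, ν i • (p i : E)) + (1 - σ) • uE k with hLEdef
  set RE : ℕ → E := fun k => (∑ i, ν i • (q i : E)) + (1 - σ) • uE k with hREdef
  have hLA : ∀ k : ℕ, k ≤ N → LE k ∈ A := fun k hk =>
    comb_mem A hconv ν hν0 hσ1.le p ⟨uE k, huA k hk⟩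
  have hRA : ∀ k : ℕ, k ≤ N → RE k ∈ A := fun k hk =>
    comb_mem A hconv ν hν0 hσ1.le q ⟨uE k, huA k hk⟩
  have hLR : ∀ (k : ℕ), k ≤ N → ∀ (h1 : LE k ∈ A) (h2 : RE k ∈ A),
      (⟨LE k, h1⟩:↥A) ≤ ⟨RE k, h2⟩ := by
    intro k hk h1 h2
    exact mono_comb A hconv hcompat m ν p q ⟨uE k, huA k hk⟩ hν0 hσ1 hpq h1 h2
  -- starting estimate
  have esum : ∑ i, ν i • ((p i : E) - (x:E)) = (∑ i, ν i • (p i : E)) - σ • (x:E) := by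
    rw [hσdef, Finset.sum_smul, ← Finset.sum_sub_distrib]
    exact Finset.sum_congr rfl fun i _ => smul_sub _ _ _
  have e0 : (x:E) - LE 0 = -(∑ i, ν i • ((p i : E) - (x:E))) := by
    have h0 : uE 0 = (x:E) := by simp [huEdef]
    simp only [hLEdef]
    rw [h0, esum]
    module
  have hb : ‖∑ i, ν i • ((p i : E) - (x:E))‖ ≤ K1 / N := by
    calc ‖∑ i, ν i • ((p i:E) - (x:E))‖ ≤ ∑ i, ‖ν i • ((p i:E) - (x:E))‖ :=
          norm_sum_le _ _
    _ = ∑ i, μ i * ‖(p i:E) - (x:E)‖ / N := by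
        refine Finset.sum_congr rfl fun i _ => ?_
        rw [norm_smul, Real.norm_of_nonneg (hν0 i)]
        simp only [hνdef]
        ring
    _ = K1 / N := by rw [hK1def, Finset.sum_div]
  -- step estimate
  have hudiff : ∀ k : ℕ, uE (k+1) - uE k = (1/(N:ℝ)) • ((y:E) - (x:E)) := by
    intro k
    simp only [huEdef]
    push_cast
    have hrw : ((k:ℝ)+1)/N = (k:ℝ)/N + 1/N := by ring
    rw [hrw]
    module
  have hsq : (∑ i, ν i • (q i : E)) - (∑ i, ν i • (p i : E)) = (1/(N:ℝ)) • S := by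
    rw [hSdef, Finset.smul_sum, ← Finset.sum_sub_distrib]
    refine Finset.sum_congr rfl fun i _ => ?_
    rw [← smul_sub, smul_smul]
    congr 1
    simp only [hνdef]; ring
  set B : ℝ := D/N + σ * ‖(y:E)-(x:E)‖/N with hBdef
  have hB0 : 0 ≤ B := by
    have h4 : (0:ℝ) ≤ ‖(y:E) - (x:E)‖ := norm_nonneg _
    have : 0 ≤ σ * ‖(y:E)-(x:E)‖/N := by positivity
    have : 0 ≤ D / N := by positivity
    rw [hBdef]; linarith
  have hstep : ∀ k : ℕ, ‖RE k - LE (k+1)‖ ≤ B := by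
    intro k
    have e : RE k - LE (k+1)
        = (1/(N:ℝ)) • (S - ((y:E) - (x:E))) + (σ/N) • ((y:E)-(x:E)) := by
      simp only [hREdef, hLEdef]
      have h5 : (∑ i, ν i • (q i:E)) + (1-σ) • uE k
            - ((∑ i, ν i • (p i:E)) + (1-σ) • uE (k+1))
          = ((∑ i, ν i • (q i:E)) - (∑ i, ν i • (p i:E)))
            - (1-σ) • (uE (k+1) - uE k) := by
        rw [smul_sub]; abel
      rw [h5, hsq, hudiff]
      module
    rw [e, hBdef]
    calc ‖(1/(N:ℝ)) • (S - ((y:E)-(x:E))) + (σ/N) • ((y:E)-(x:E))‖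
        ≤ ‖(1/(N:ℝ)) • (S - ((y:E)-(x:E)))‖ + ‖(σ/N) • ((y:E)-(x:E))‖ :=
          norm_add_le _ _
    _ = D/N + σ * ‖(y:E)-(x:E)‖/N := by
        rw [norm_smul, norm_smul,
          Real.norm_of_nonneg (by positivity : (0:ℝ) ≤ 1/(N:ℝ)),
          Real.norm_of_nonneg (div_nonneg hσ0 hN0.le),
          norm_sub_rev S, ← hDdef]
        ring
  -- telescoping
  have key : ∀ k : ℕ, k < N → ∀ (h2 : RE k ∈ A),
      f x - f ⟨RE k, h2⟩ ≤ K1/N + (k:ℝ) * B := by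
    intro k
    induction k with
    | zero =>
      intro hk h2
      have h1 : LE 0 ∈ A := hLA 0 (Nat.zero_le N)
      have t1 : f x - f ⟨LE 0, h1⟩ ≤ K1/N := by
        calc f x - f ⟨LE 0, h1⟩ ≤ ‖(x:E) - LE 0‖ := flip _ _
        _ = ‖∑ i, ν i • ((p i:E) - (x:E))‖ := by rw [e0, norm_neg]
        _ ≤ K1/N := hb
      have t2 : f ⟨LE 0, h1⟩ ≤ f ⟨RE 0, h2⟩ := hmono (hLR 0 (Nat.zero_le N) h1 h2)
      push_cast
      have hz : (0:ℝ) * B = 0 := by ring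
      linarith
    | succ k ihk =>
      intro hk h2
      have hkN : k < N := Nat.lt_of_succ_lt hk
      have hRk : RE k ∈ A := hRA k hkN.le
      have hLk1 : LE (k+1) ∈ A := hLA (k+1) (Nat.le_of_lt hk)
      have ih := ihk hkN hRk
      have t3 : f ⟨RE k, hRk⟩ - f ⟨LE (k+1), hLk1⟩ ≤ B :=
        le_trans (flip _ _) (hstep k)
      have t4 : f ⟨LE (k+1), hLk1⟩ ≤ f ⟨RE (k+1), h2⟩ :=
        hmono (hLR (k+1) (Nat.le_of_lt hk) hLk1 h2)
      push_cast
      calc f x - f ⟨RE (k+1), h2⟩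
          = (f x - f ⟨RE k, hRk⟩) + (f ⟨RE k, hRk⟩ - f ⟨LE (k+1), hLk1⟩)
            + (f ⟨LE (k+1), hLk1⟩ - f ⟨RE (k+1), h2⟩) := by ring
      _ ≤ (K1/(N:ℝ) + (k:ℝ)*B) + B + 0 :=
          add_le_add (add_le_add ih t3) (sub_nonpos.2 t4)
      _ = K1/(N:ℝ) + ((k:ℝ)+1)*B := by ring
  -- final step
  obtain ⟨N', hN'⟩ : ∃ N', N = N' + 1 := ⟨N - 1, by omega⟩
  have hcast : (N:ℝ) = (N':ℝ) + 1 := by rw [hN']; push_cast; ring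
  have hNN' : N' < N := by omega
  have hlast : ‖RE N' - (y:E)‖ ≤ K2/N + ‖(y:E)-(x:E)‖/N := by
    have huN' : uE N' - (y:E) = (1/(N:ℝ)) • ((x:E) - (y:E)) := by
      simp only [huEdef]
      have h6 : 1 - (N':ℝ)/N = 1/(N:ℝ) := by
        rw [hcast]; field_simp; ring
      have h7 : ((N':ℝ))/N = 1 - 1/(N:ℝ) := by
        rw [hcast]; field_simp; ring
      rw [h7]
      have h8 : (1 - (1 - 1/(N:ℝ))) = 1/(N:ℝ) := by ring
      rw [h8]
      module
    have esumq : ∑ i, ν i • ((q i : E) - (y:E)) = (∑ i, ν i • (q i : E)) - σ • (y:E) := by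
      rw [hσdef, Finset.sum_smul, ← Finset.sum_sub_distrib]
      exact Finset.sum_congr rfl fun i _ => smul_sub _ _ _
    have e9 : RE N' - (y:E)
        = (∑ i, ν i • ((q i : E) - (y:E))) + ((1-σ) * (1/(N:ℝ))) • ((x:E)-(y:E)) := by
      simp only [hREdef]
      rw [esumq]
      have h10 : (1-σ) • (uE N' - (y:E)) = ((1-σ) * (1/(N:ℝ))) • ((x:E)-(y:E)) := by
        rw [huN', smul_smul]
      rw [← h10]
      module
    rw [e9]
    have hbq : ‖∑ i, ν i • ((q i : E) - (y:E))‖ ≤ K2 / N := by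
      calc ‖∑ i, ν i • ((q i:E) - (y:E))‖ ≤ ∑ i, ‖ν i • ((q i:E) - (y:E))‖ :=
            norm_sum_le _ _
      _ = ∑ i, μ i * ‖(q i:E) - (y:E)‖ / N := by
          refine Finset.sum_congr rfl fun i _ => ?_
          rw [norm_smul, Real.norm_of_nonneg (hν0 i)]
          simp only [hνdef]
          ring
      _ = K2 / N := by rw [hK2def, Finset.sum_div]
    have hσle : 1 - σ ≤ 1 := by rw [hσdef]; linarith
    have hσge : 0 ≤ 1 - σ := by rw [hσdef]; linarith
    calc ‖(∑ i, ν i • ((q i : E) - (y:E))) + ((1-σ) * (1/(N:ℝ))) • ((x:E)-(y:E))‖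
        ≤ ‖∑ i, ν i • ((q i : E) - (y:E))‖ + ‖((1-σ) * (1/(N:ℝ))) • ((x:E)-(y:E))‖ :=
          norm_add_le _ _
    _ ≤ K2/N + ‖(y:E)-(x:E)‖/N := by
        have h13 : (0:ℝ) ≤ (1-σ) * (1/(N:ℝ)) :=
          mul_nonneg hσge (by positivity)
        have h14 : ‖((1-σ) * (1/(N:ℝ))) • ((x:E)-(y:E))‖
            = (1-σ) * (1/(N:ℝ)) * ‖(x:E)-(y:E)‖ := by
          rw [norm_smul, Real.norm_of_nonneg h13]
        rw [h14, norm_sub_rev]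
        have h12 : (1-σ) * ‖(y:E)-(x:E)‖ ≤ ‖(y:E)-(x:E)‖ :=
          mul_le_of_le_one_left (norm_nonneg _) hσle
        have h11 : (1-σ) * (1/(N:ℝ)) * ‖(y:E)-(x:E)‖ ≤ ‖(y:E)-(x:E)‖/N := by
          calc (1-σ) * (1/(N:ℝ)) * ‖(y:E)-(x:E)‖
              = ((1-σ) * ‖(y:E)-(x:E)‖) / N := by ring
          _ ≤ ‖(y:E)-(x:E)‖ / N := by gcongr
        linarith [hbq]
  have hRN' : RE N' ∈ A := hRA N' hNN'.le
  have main := key N' hNN' hRN'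
  have tlast : f ⟨RE N', hRN'⟩ - f y ≤ K2/N + ‖(y:E)-(x:E)‖/N :=
    le_trans (flip _ _) hlast
  have hNB : (N':ℝ) * B ≤ (N:ℝ) * B := by
    have : (N':ℝ) ≤ N := by exact_mod_cast hNN'.le
    exact mul_le_mul_of_nonneg_right this hB0
  have hNBval : (N:ℝ) * B = D + M * ‖(y:E)-(x:E)‖/N := by
    rw [hBdef, hσM]
    field_simp
  have hKexp : K/N = K1/N + K2/N + ‖(y:E)-(x:E)‖/N + M*‖(y:E)-(x:E)‖/N := by
    rw [hKdef]; ring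
  have tot : (f x - f ⟨RE N', hRN'⟩) + (f ⟨RE N', hRN'⟩ - f y)
      ≤ (K1/(N:ℝ) + (N':ℝ)*B) + (K2/(N:ℝ) + ‖(y:E)-(x:E)‖/(N:ℝ)) :=
    add_le_add main tlast
  have tot2 : f x - f y ≤ K1/(N:ℝ) + (N':ℝ)*B + (K2/(N:ℝ) + ‖(y:E)-(x:E)‖/(N:ℝ)) := by
    linarith [tot]
  have s1 : f x - f y ≤ K1/(N:ℝ) + (N:ℝ)*B + (K2/(N:ℝ) + ‖(y:E)-(x:E)‖/(N:ℝ)) :=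
    le_trans tot2 (add_le_add (add_le_add le_rfl hNB) le_rfl)
  rw [hNBval] at s1
  have e14 : K1/(N:ℝ) + (D + M * ‖(y:E)-(x:E)‖/(N:ℝ)) + (K2/(N:ℝ) + ‖(y:E)-(x:E)‖/(N:ℝ))
      = D + K/(N:ℝ) := by
    rw [hKexp]; ring
  rw [e14] at s1
  exact le_trans s1 (add_le_add le_rfl hKN)


lemma dCone_nonempty : (dCone A).Nonempty := ⟨0, zero_mem_dCone A⟩

lemma mem_dLset_zero (x y : ↥A) :
    (0:ℝ) ∈ {t : ℝ | ∃ f : ↥A → ℝ, Monotone f ∧ LipschitzWith 1 f ∧ t = f x - f y} :=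
  ⟨fun _ => 0, monotone_const, (LipschitzWith.const 0).weaken zero_le_one, by simp⟩

lemma dLset_bddAbove (x y : ↥A) :
    BddAbove {t : ℝ | ∃ f : ↥A → ℝ, Monotone f ∧ LipschitzWith 1 f ∧ t = f x - f y} := by
  refine ⟨dist x y, ?_⟩
  rintro t ⟨f, hm, hl, rfl⟩
  have h := hl.dist_le_mul x y
  simp only [NNReal.coe_one, one_mul] at h
  have h1 : f x - f y ≤ dist (f x) (f y) := by
    rw [Real.dist_eq]; exact le_abs_self _
  linarith

lemma dL_nonneg (x y : ↥A) : 0 ≤ dL x y :=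
  le_csSup (dLset_bddAbove A x y) (mem_dLset_zero A x y)

lemma dL_le_infDist (hconv : Convex ℝ A)
    (hcompat : ∀ (a b c : ↥A) (lam : ℝ) (h0 : 0 ≤ lam) (h1 : lam ≤ 1), a ≤ b →
      (⟨lam • (a : E) + (1 - lam) • (c : E),
          hconv a.2 c.2 h0 (by linarith) (by ring)⟩ : ↥A) ≤
        ⟨lam • (b : E) + (1 - lam) • (c : E),
          hconv b.2 c.2 h0 (by linarith) (by ring)⟩)
    (x y : ↥A) :
    dL x y ≤ Metric.infDist ((y : E) - (x : E)) (dCone A) := by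
  apply Real.sSup_le
  · rintro t ⟨f, hm, hl, rfl⟩
    by_contra hc
    push_neg at hc
    obtain ⟨s, hsmem, hslt⟩ := (Metric.infDist_lt_iff (dCone_nonempty A)).1 hc
    have := star_bound A hconv hcompat f hm hl x y hsmem
    rw [dist_eq_norm] at hslt
    linarith
  · exact Metric.infDist_nonneg

lemma infDist_le_dL (hconv : Convex ℝ A) (x y : ↥A) :
    Metric.infDist ((y : E) - (x : E)) (dCone A) ≤ dL x y := by
  set w : E := (y : E) - (x : E) with hwdef
  refine le_of_forall_lt ?_
  intro r hr
  rcases lt_or_ge r 0 with hr0 | hr0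
  · exact lt_of_lt_of_le hr0 (dL_nonneg A x y)
  -- 0 ≤ r < infDist w C.  Pick r' with r < r' < infDist.
  obtain ⟨r', hrr', hr'⟩ := exists_between hr
  have hr'0 : 0 < r' := lt_of_le_of_lt hr0 hrr'
  -- separate ball w r' from the cone
  have hdisj : Disjoint (Metric.ball w r') (dCone A) := by
    rw [Set.disjoint_left]
    intro v hv hvC
    have h1 : Metric.infDist w (dCone A) ≤ dist w v :=
      Metric.infDist_le_dist_of_mem hvC
    rw [Metric.mem_ball, dist_comm] at hv
    linarith
  obtain ⟨ξ, u, hball, hcone⟩ :=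
    geometric_hahn_banach_open (convex_ball w r') Metric.isOpen_ball
      (convex_dCone A) hdisj
  have hu0 : u ≤ 0 := by
    have := hcone 0 (zero_mem_dCone A)
    simpa using this
  have hξw : ξ w < 0 := by
    have := hball w (Metric.mem_ball_self hr'0)
    linarith
  set ρ : ℝ := -ξ w with hρdef
  have hρ0 : 0 < ρ := by rw [hρdef]; linarith
  have hconeNN : ∀ v ∈ dCone A, 0 ≤ ξ v := by
    intro v hv
    by_contra hneg
    push_neg at hneg
    set τ : ℝ := u / ξ v + 1 with hτdef
    have hτ0 : 0 ≤ τ := by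
      have : 0 ≤ u / ξ v := div_nonneg_of_nonpos hu0 hneg.le
      rw [hτdef]; linarith
    have hmem := smul_mem_dCone A hv hτ0
    have h2 := hcone _ hmem
    rw [map_smul, smul_eq_mul, hτdef] at h2
    have h3 : (u / ξ v + 1) * ξ v = u + ξ v := by
      rw [add_mul, div_mul_cancel₀ _ hneg.ne, one_mul]
    rw [h3] at h2
    linarith
  -- norm bound : |ξ v| * r' ≤ ρ * ‖v‖
  have hbound : ∀ v : E, |ξ v| * r' ≤ ρ * ‖v‖ := by
    intro v
    rcases eq_or_ne v 0 with rfl | hv0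
    · simp
    have hnv : 0 < ‖v‖ := norm_pos_iff.2 hv0
    -- for any 0 < r'' < r' : |ξ v| ≤ ρ * ‖v‖ / r''
    have hstep : ∀ r'' : ℝ, 0 < r'' → r'' < r' → |ξ v| ≤ ρ * ‖v‖ / r'' := by
      intro r'' h0'' h''
      have ht0 : 0 < r'' / ‖v‖ := by positivity
      have hmem1 : w + (r''/‖v‖) • v ∈ Metric.ball w r' := by
        rw [Metric.mem_ball, dist_eq_norm]
        have : ‖w + (r''/‖v‖) • v - w‖ = ‖(r''/‖v‖) • v‖ := by congr 1; abel
        rw [this, norm_smul, Real.norm_of_nonneg ht0.le, div_mul_cancel₀ _ hnv.ne']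
        exact h''
      have hmem2 : w + (-(r''/‖v‖)) • v ∈ Metric.ball w r' := by
        rw [Metric.mem_ball, dist_eq_norm]
        have : ‖w + (-(r''/‖v‖)) • v - w‖ = ‖(-(r''/‖v‖)) • v‖ := by congr 1; abel
        rw [this, norm_smul]
        rw [Real.norm_eq_abs, abs_neg, abs_of_nonneg ht0.le, div_mul_cancel₀ _ hnv.ne']
        exact h''
      have hb1 := hball _ hmem1
      have hb2 := hball _ hmem2
      rw [map_add, map_smul, smul_eq_mul] at hb1 hb2
      have e1 : (r''/‖v‖) * ξ v < ρ := by rw [hρdef]; linarith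
      have e2 : -((r''/‖v‖) * ξ v) < ρ := by
        rw [hρdef]
        have : (-(r''/‖v‖)) * ξ v = -((r''/‖v‖) * ξ v) := by ring
        rw [this] at hb2
        linarith
      have e3 : |(r''/‖v‖) * ξ v| ≤ ρ := abs_le.2 ⟨by linarith, e1.le⟩
      rw [abs_mul, abs_of_nonneg ht0.le] at e3
      have e5 := mul_le_mul_of_nonneg_right e3 hnv.le
      have e4 : (r''/‖v‖) * |ξ v| * ‖v‖ = |ξ v| * r'' := by
        field_simp
      rw [e4] at e5
      rw [le_div_iff₀ h0'']
      linarith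
    by_contra hcon
    push_neg at hcon
    -- hcon : ρ * ‖v‖ < |ξ v| * r'
    have hξv0 : 0 < |ξ v| := by
      rcases le_or_gt |ξ v| 0 with h | h
      · exfalso; nlinarith [mul_nonneg hρ0.le hnv.le, hr'0]
      · exact h
    have hlt : ρ * ‖v‖ / |ξ v| < r' := by
      rw [div_lt_iff₀ hξv0]; linarith [hcon]
    have hge0 : 0 ≤ ρ * ‖v‖ / |ξ v| := by positivity
    obtain ⟨r'', hr''1, hr''2⟩ := exists_between hlt
    have h0'' : 0 < r'' := lt_of_le_of_lt hge0 hr''1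
    have := hstep r'' h0'' hr''2
    rw [le_div_iff₀ h0''] at this
    rw [div_lt_iff₀ hξv0] at hr''1
    nlinarith
  -- the competitor function
  have hξ0 : ξ w ≠ 0 := by linarith
  set g : ↥A → ℝ := fun a => (r' / ρ) * ξ (a : E) with hgdef
  have hgmono : Monotone g := by
    intro a b hab
    have h1 : 0 ≤ ξ ((b:E) - (a:E)) := hconeNN _ (sub_mem_dCone A hab)
    rw [map_sub] at h1
    have h2 : 0 ≤ r' / ρ := by positivity
    simp only [hgdef]
    nlinarith
  have hglip : LipschitzWith 1 g := by
    apply LipschitzWith.of_dist_le_mul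
    intro a b
    simp only [hgdef, NNReal.coe_one, one_mul, Real.dist_eq]
    have h2 : 0 ≤ r' / ρ := by positivity
    have h1 : (r'/ρ) * ξ (a:E) - (r'/ρ) * ξ (b:E) = (r'/ρ) * ξ ((a:E) - (b:E)) := by
      rw [map_sub]; ring
    rw [h1, abs_mul, abs_of_nonneg h2, Subtype.dist_eq, dist_eq_norm]
    have h3 := hbound ((a:E) - (b:E))
    rw [div_mul_eq_mul_div, div_le_iff₀ hρ0]
    calc r' * |ξ ((a:E)-(b:E))| = |ξ ((a:E)-(b:E))| * r' := by ring
    _ ≤ ρ * ‖(a:E)-(b:E)‖ := h3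
    _ = ‖(a:E)-(b:E)‖ * ρ := by ring
  have hval : g x - g y = r' := by
    simp only [hgdef]
    have hxy : ξ (x:E) - ξ (y:E) = -(ξ w) := by rw [hwdef, map_sub]; ring
    calc (r'/ρ) * ξ (x:E) - (r'/ρ) * ξ (y:E) = (r'/ρ) * (ξ (x:E) - ξ (y:E)) := by ring
    _ = (r'/ρ) * ρ := by rw [hxy, hρdef]
    _ = r' := by field_simp
  have hmem : r' ∈ {t : ℝ | ∃ f : ↥A → ℝ, Monotone f ∧ LipschitzWith 1 f ∧ t = f x - f y} :=
    ⟨g, hgmono, hglip, hval.symm⟩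
  exact lt_of_lt_of_le hrr' (le_csSup (dLset_bddAbove A x y) hmem)

lemma infDist_smul {α : ℝ} (hα : 0 ≤ α) (v : E) :
    Metric.infDist (α • v) (dCone A) = α * Metric.infDist v (dCone A) := by
  rcases hα.eq_or_lt with heq | hα0
  · rw [← heq, zero_smul, zero_mul]
    exact Metric.infDist_zero_of_mem (zero_mem_dCone A)
  apply le_antisymm
  · refine le_of_forall_pos_le_add ?_
    intro ε hε
    have hlt : Metric.infDist v (dCone A) < Metric.infDist v (dCone A) + ε/α :=
      lt_add_of_pos_right _ (by positivity)
    obtain ⟨s, hs, hds⟩ := (Metric.infDist_lt_iff (dCone_nonempty A)).1 hlt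
    have h1 : Metric.infDist (α•v) (dCone A) ≤ dist (α•v) (α•s) :=
      Metric.infDist_le_dist_of_mem (smul_mem_dCone A hs hα)
    have h2 : dist (α•v) (α•s) = α * dist v s := by
      rw [dist_smul₀, Real.norm_of_nonneg hα]
    rw [h2] at h1
    calc Metric.infDist (α•v) (dCone A) ≤ α * dist v s := h1
    _ ≤ α * (Metric.infDist v (dCone A) + ε/α) :=
        mul_le_mul_of_nonneg_left hds.le hα0.le
    _ = α * Metric.infDist v (dCone A) + ε := by field_simp
  · refine le_of_forall_pos_le_add ?_
    intro ε hε
    have hlt : Metric.infDist (α•v) (dCone A) < Metric.infDist (α•v) (dCone A) + ε :=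
      lt_add_of_pos_right _ hε
    obtain ⟨s, hs, hds⟩ := (Metric.infDist_lt_iff (dCone_nonempty A)).1 hlt
    have hmem : α⁻¹ • s ∈ dCone A := smul_mem_dCone A hs (by positivity)
    have h1 : Metric.infDist v (dCone A) ≤ dist v (α⁻¹ • s) :=
      Metric.infDist_le_dist_of_mem hmem
    have h2 : dist v (α⁻¹ • s) = α⁻¹ * dist (α•v) s := by
      rw [dist_eq_norm, dist_eq_norm]
      have e : v - α⁻¹ • s = α⁻¹ • (α • v - s) := by
        rw [smul_sub, smul_smul, inv_mul_cancel₀ hα0.ne', one_smul]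
      rw [e, norm_smul, Real.norm_of_nonneg (inv_nonneg.2 hα0.le)]
    rw [h2] at h1
    have h3 : α * Metric.infDist v (dCone A) ≤ dist (α•v) s := by
      calc α * Metric.infDist v (dCone A) ≤ α * (α⁻¹ * dist (α•v) s) :=
          mul_le_mul_of_nonneg_left h1 hα0.le
      _ = dist (α•v) s := by field_simp
    linarith [hds]

lemma dL_eq_infDist (hconv : Convex ℝ A)
    (hcompat : ∀ (a b c : ↥A) (lam : ℝ) (h0 : 0 ≤ lam) (h1 : lam ≤ 1), a ≤ b →
      (⟨lam • (a : E) + (1 - lam) • (c : E),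
          hconv a.2 c.2 h0 (by linarith) (by ring)⟩ : ↥A) ≤
        ⟨lam • (b : E) + (1 - lam) • (c : E),
          hconv b.2 c.2 h0 (by linarith) (by ring)⟩)
    (x y : ↥A) :
    dL x y = Metric.infDist ((y : E) - (x : E)) (dCone A) :=
  le_antisymm (dL_le_infDist A hconv hcompat x y) (infDist_le_dL A hconv x y)

end DLAux

/-- Homogeneity of the L-distance under convex combinations: on a convex subset `A` of a
normed space, with a partial order compatible with binary convex combinations, one has
`d_L(αx + (1−α)z, αy + (1−α)z) = α · d_L(x, y)`. -/
theorem dL_convex_combination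
    {E : Type*} [NormedAddCommGroup E] [NormedSpace ℝ E]
    (A : Set E) (hconv : Convex ℝ A) [PartialOrder ↥A]
    (hcompat : ∀ (a b c : ↥A) (lam : ℝ) (h0 : 0 ≤ lam) (h1 : lam ≤ 1), a ≤ b →
      (⟨lam • (a : E) + (1 - lam) • (c : E),
          hconv a.2 c.2 h0 (by linarith) (by ring)⟩ : ↥A) ≤
        ⟨lam • (b : E) + (1 - lam) • (c : E),
          hconv b.2 c.2 h0 (by linarith) (by ring)⟩)
    (x y z : ↥A) (α : ℝ) (hα0 : 0 ≤ α) (hα1 : α ≤ 1) :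
    dL (⟨α • (x : E) + (1 - α) • (z : E),
          hconv x.2 z.2 hα0 (by linarith) (by ring)⟩ : ↥A)
        (⟨α • (y : E) + (1 - α) • (z : E),
          hconv y.2 z.2 hα0 (by linarith) (by ring)⟩ : ↥A) =
      α * dL x y := by
  rw [DLAux.dL_eq_infDist A hconv hcompat, DLAux.dL_eq_infDist A hconv hcompat]
  have e : ((α • (y:E) + (1 - α) • (z:E)) : E) - (α • (x:E) + (1 - α) • (z:E))
      = α • ((y:E) - (x:E)) := by module
  show Metric.infDist ((α • (y:E) + (1 - α) • (z:E)) - (α • (x:E) + (1 - α) • (z:E)))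
      (DLAux.dCone A) = _
  rw [e, DLAux.infDist_smul A hα0]
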